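/- arXiv:2305.05894 — 2 statements merged into one kernel-verified Lean document; each statement's English description precedes it below -/
import Mathlib

section
/- (Theorem 1, unobservable part.) Fix integers n ≥ 1, m ≥ 2, A ∈ ℝ^{n×n}, C = (1,0,…,0) ∈ ℝ^{1×n}, F = A⊗I_m, H = C⊗V̄, F_oo = A⊗I_{m-1}, H_o = C⊗I_{m-1}; let r ≠ 0, Q ∈ ℝ^{n×n} symmetric positive semidefinite, p ≥ 0. Let the CKF be: P_0 = p·I_{nm}, L_k = −F P_k Hᵀ(H P_k Hᵀ + r²I_{m-1})⁻¹, P_{k+1} = (F + L_k H)P_k Fᵀ + Q⊗I_m, x̂[k+1] = F x̂[k] − L_k(y[k] − H x̂[k]) for a given measurement sequence y[k] ∈ ℝ^{m-1} and initial guess x̂[0] ∈ ℝ^{nm}. Let the structured Kalman filter with Γ = 0 and arbitrary gain matrices L̂_k ∈ ℝ^{n(m-1)×(m-1)} be: ξ̂_o[k+1] = F_oo ξ̂_o[k] − L̂_k(y[k] − H_o ξ̂_o[k]), ξ̂_ō[k+1] = A ξ̂_ō[k], with initial condition (ξ̂_o[0]; ξ̂_ō[0]) = T(0)⁻¹ x̂[0]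 where T(0) = [I_n⊗V̄†, I_n⊗1_m]. Then for every k ≥ 0, ξ̂_ō[k] = (1/m)(I_n⊗1_mᵀ) x̂[k]; i.e., the structured filter with Γ = 0 yields the same predicted unobservable state as the CKF. -/
open Matrix
open scoped Kronecker Matrix

noncomputable section

/-- `V̄ = [I_{m-1}  -1_{m-1}] ∈ ℝ^{(m-1)×m}`. -/
def Vbar (m : ℕ) : Matrix (Fin (m-1)) (Fin m) ℝ :=
  Matrix.of fun i j => if (j : ℕ) = m - 1 then -1 else if (j : ℕ) = (i : ℕ) then 1 else 0

/-- The Moore–Penrose inverse `V̄† = V̄ᵀ(V̄V̄ᵀ)⁻¹`. -/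
def Vdag (m : ℕ) : Matrix (Fin m) (Fin (m-1)) ℝ :=
  (Vbar m)ᵀ * (Vbar m * (Vbar m)ᵀ)⁻¹

/-- The all-ones column vector `1_k`, as a `k × 1` matrix. -/
def onesCol (k : ℕ) : Matrix (Fin k) (Fin 1) ℝ := Matrix.of fun _ _ => 1

/-- `I_n ⊗ 1_m`, as an `(nm) × n` matrix. -/
def onesK (n m : ℕ) : Matrix (Fin n × Fin m) (Fin n) ℝ :=
  Matrix.of fun p j => if p.1 = j then 1 else 0

/-- `C = (1,0,…,0) ∈ ℝ^{1×n}`. -/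
def Cmat (n : ℕ) : Matrix (Fin 1) (Fin n) ℝ :=
  Matrix.of fun _ j => if (j : ℕ) = 0 then 1 else 0

/-- `F = A ⊗ I_m`. -/
def Fmat (n m : ℕ) (A : Matrix (Fin n) (Fin n) ℝ) :
    Matrix (Fin n × Fin m) (Fin n × Fin m) ℝ :=
  A ⊗ₖ (1 : Matrix (Fin m) (Fin m) ℝ)

/-- `H = C ⊗ V̄`. -/
def Hmat (n m : ℕ) : Matrix (Fin 1 × Fin (m-1)) (Fin n × Fin m) ℝ :=
  Cmat n ⊗ₖ Vbar m

/-- `F_oo = A ⊗ I_{m-1}`. -/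
def Foo (n m : ℕ) (A : Matrix (Fin n) (Fin n) ℝ) :
    Matrix (Fin n × Fin (m-1)) (Fin n × Fin (m-1)) ℝ :=
  A ⊗ₖ (1 : Matrix (Fin (m-1)) (Fin (m-1)) ℝ)

/-- `H_o = C ⊗ I_{m-1}`. -/
def Ho (n m : ℕ) : Matrix (Fin 1 × Fin (m-1)) (Fin n × Fin (m-1)) ℝ :=
  Cmat n ⊗ₖ (1 : Matrix (Fin (m-1)) (Fin (m-1)) ℝ)

/-- `D = (1/m)·C(I_n ⊗ 1_mᵀ)`. -/
def Dmat (n m : ℕ) : Matrix (Fin 1) (Fin n × Fin m) ℝ :=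
  (m : ℝ)⁻¹ • (Cmat n * (onesK n m)ᵀ)

/-- `I_n ⊗ V̄†`. -/
def VdagK (n m : ℕ) : Matrix (Fin n × Fin m) (Fin n × Fin (m-1)) ℝ :=
  (1 : Matrix (Fin n) (Fin n) ℝ) ⊗ₖ Vdag m

/-- `I_n ⊗ V̄`. -/
def VbarK (n m : ℕ) : Matrix (Fin n × Fin (m-1)) (Fin n × Fin m) ℝ :=
  (1 : Matrix (Fin n) (Fin n) ℝ) ⊗ₖ Vbar m

/-- `T(Γ) = [(I_n⊗V̄†) + (I_n⊗1_m)Γ , I_n⊗1_m]`. -/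
def Tmat (n m : ℕ) (Γ : Matrix (Fin n) (Fin n × Fin (m-1)) ℝ) :
    Matrix (Fin n × Fin m) ((Fin n × Fin (m-1)) ⊕ Fin n) ℝ :=
  Matrix.fromCols (VdagK n m + onesK n m * Γ) (onesK n m)

/-- The claimed inverse of `T(Γ)`: top block-row `I_n⊗V̄`,
bottom block-row `-Γ(I_n⊗V̄) + (1/m)(I_n⊗1_mᵀ)`. -/
def Tinv (n m : ℕ) (Γ : Matrix (Fin n) (Fin n × Fin (m-1)) ℝ) :
    Matrix ((Fin n × Fin (m-1)) ⊕ Fin n) (Fin n × Fin m) ℝ :=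
  Matrix.fromRows (VbarK n m) (-(Γ * VbarK n m) + (m : ℝ)⁻¹ • (onesK n m)ᵀ)


lemma sum_Vbar_row (m : ℕ) (a : Fin (m-1)) : ∑ s : Fin m, Vbar m a s = 0 := by
  have ha : (a : ℕ) < m - 1 := a.isLt
  have h1 : m - 1 < m := by omega
  have h2 : (a : ℕ) < m := by omega
  have heq : ∀ s : Fin m, Vbar m a s =
      (if s = ⟨m-1, h1⟩ then (-1:ℝ) else 0) + (if s = ⟨(a:ℕ), h2⟩ then 1 else 0) := by
    rintro ⟨sv, hs⟩
    simp only [Vbar, Matrix.of_apply, Fin.mk.injEq]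
    by_cases e1 : sv = m-1 <;> by_cases e2 : sv = (a:ℕ) <;> simp [e1, e2, ha.ne] <;> omega
  rw [Finset.sum_congr rfl fun s _ => heq s, Finset.sum_add_distrib]
  have hne : (⟨m-1, h1⟩ : Fin m) ≠ ⟨(a:ℕ), h2⟩ := by
    intro h; rw [Fin.mk.injEq] at h; omega
  simp

lemma VbarK_mul_onesK (n m : ℕ) : VbarK n m * onesK n m = 0 := by
  ext ⟨i, a⟩ j
  simp only [VbarK, onesK, Matrix.mul_apply, Matrix.zero_apply, Fintype.sum_prod_type,
    kroneckerMap_apply, Matrix.of_apply, Matrix.one_apply]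
  simp only [mul_ite, mul_one, mul_zero, ite_mul, one_mul, zero_mul]
  rw [Finset.sum_comm]
  by_cases h : i = j
  · simp [h, sum_Vbar_row m a]
  · simp [h]

lemma onesKT_mul_kron (n m : ℕ) (B : Matrix (Fin n) (Fin n) ℝ) :
    (onesK n m)ᵀ * (B ⊗ₖ (1 : Matrix (Fin m) (Fin m) ℝ)) = B * (onesK n m)ᵀ := by
  ext i ⟨j, t⟩
  simp only [onesK, Matrix.mul_apply, Matrix.transpose_apply, Fintype.sum_prod_type,
    kroneckerMap_apply, Matrix.of_apply, Matrix.one_apply, mul_ite, mul_one, mul_zero,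
    ite_mul, one_mul, zero_mul]
  simp [Finset.sum_ite_eq, Finset.sum_ite_eq', eq_comm]

lemma VbarK_comm (n m : ℕ) (B : Matrix (Fin n) (Fin n) ℝ) :
    VbarK n m * (B ⊗ₖ (1 : Matrix (Fin m) (Fin m) ℝ)) =
      (B ⊗ₖ (1 : Matrix (Fin (m-1)) (Fin (m-1)) ℝ)) * VbarK n m := by
  simp only [VbarK]
  rw [← Matrix.mul_kronecker_mul, ← Matrix.mul_kronecker_mul]
  simp

lemma Hmat_factor (n m : ℕ) : Hmat n m = Ho n m * VbarK n m := by
  simp only [Hmat, Ho, VbarK]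
  rw [← Matrix.mul_kronecker_mul]
  simp

/-- **Theorem 1, unobservable part.** With the CKF
(`P₀ = p·I`, gains `L_k`, state `x̂`) and the structured Kalman filter with `Γ = 0`
and arbitrary gains `L̂_k`, initialized by `(ξ̂_o[0]; ξ̂_ō[0]) = T(0)⁻¹x̂[0]`, one has
`ξ̂_ō[k] = (1/m)(I_n⊗1_mᵀ)x̂[k]` for every `k`. -/
theorem stmt_11 (n m : ℕ) (hn : 1 ≤ n) (hm : 2 ≤ m)
    (A : Matrix (Fin n) (Fin n) ℝ) (r : ℝ) (hr : r ≠ 0)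
    (Q : Matrix (Fin n) (Fin n) ℝ) (hQ : Q.PosSemidef)
    (p : ℝ) (hp : 0 ≤ p)
    (P : ℕ → Matrix (Fin n × Fin m) (Fin n × Fin m) ℝ)
    (L : ℕ → Matrix (Fin n × Fin m) (Fin 1 × Fin (m-1)) ℝ)
    (hP0 : P 0 = p • 1)
    (hL : ∀ k, L k = -(Fmat n m A * P k * (Hmat n m)ᵀ *
      (Hmat n m * P k * (Hmat n m)ᵀ + r ^ 2 • 1)⁻¹))
    (hP : ∀ k, P (k+1) = (Fmat n m A + L k * Hmat n m) * P k * (Fmat n m A)ᵀ +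
      Q ⊗ₖ (1 : Matrix (Fin m) (Fin m) ℝ))
    (y : ℕ → Fin 1 × Fin (m-1) → ℝ)
    (xhat : ℕ → Fin n × Fin m → ℝ)
    (hx : ∀ k, xhat (k+1) =
      Fmat n m A *ᵥ xhat k - L k *ᵥ (y k - Hmat n m *ᵥ xhat k))
    (Lhat : ℕ → Matrix (Fin n × Fin (m-1)) (Fin 1 × Fin (m-1)) ℝ)
    (ξo : ℕ → Fin n × Fin (m-1) → ℝ)
    (ξb : ℕ → Fin n → ℝ)
    (hξo : ∀ k, ξo (k+1) =
      Foo n m A *ᵥ ξo k - Lhat k *ᵥ (y k - Ho n m *ᵥ ξo k))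
    (hξb : ∀ k, ξb (k+1) = A *ᵥ ξb k)
    (hξo0 : ξo 0 = VbarK n m *ᵥ xhat 0)
    (hξb0 : ξb 0 = (m : ℝ)⁻¹ • ((onesK n m)ᵀ *ᵥ xhat 0)) :
    ∀ k, ξb k = (m : ℝ)⁻¹ • ((onesK n m)ᵀ *ᵥ xhat k) := by
  set Ok := (onesK n m)ᵀ with hOk
  set Vt := (VbarK n m)ᵀ with hVt
  have e1 : Ok * Fmat n m A = A * Ok := onesKT_mul_kron n m A
  have e2 : (Fmat n m A)ᵀ * Vt = Vt * (Foo n m A)ᵀ := by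
    have := congrArg Matrix.transpose (VbarK_comm n m A)
    simpa only [Matrix.transpose_mul, Fmat, Foo] using this
  have e3 : Ok * Vt = 0 := by
    rw [hOk, hVt, ← Matrix.transpose_mul, VbarK_mul_onesK, Matrix.transpose_zero]
  have e4 : (Hmat n m)ᵀ = Vt * (Ho n m)ᵀ := by
    rw [Hmat_factor n m, Matrix.transpose_mul, hVt]
  have e5 : Ok * (Q ⊗ₖ (1 : Matrix (Fin m) (Fin m) ℝ)) = Q * Ok := onesKT_mul_kron n m Q
  -- the invariant: Ok * P k * Vt = 0
  have hinv : ∀ k, Ok * P k * Vt = 0 := by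
    intro k
    induction k with
    | zero =>
        rw [hP0, Matrix.mul_smul, Matrix.mul_one, Matrix.smul_mul, e3, smul_zero]
    | succ k ih =>
        have hPH : Ok * P k * (Hmat n m)ᵀ = 0 := by
          rw [e4, ← Matrix.mul_assoc, ih, Matrix.zero_mul]
        have hL0 : Ok * L k = 0 := by
          rw [hL k, Matrix.mul_neg]
          rw [← Matrix.mul_assoc, ← Matrix.mul_assoc, ← Matrix.mul_assoc, e1,
            Matrix.mul_assoc A Ok (P k), Matrix.mul_assoc A (Ok * P k) (Hmat n m)ᵀ,
            hPH, Matrix.mul_zero, Matrix.zero_mul, neg_zero]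
        rw [hP k, Matrix.mul_add, Matrix.add_mul]
        have t2 : Ok * (Q ⊗ₖ (1 : Matrix (Fin m) (Fin m) ℝ)) * Vt = 0 := by
          rw [e5, Matrix.mul_assoc, e3, Matrix.mul_zero]
        have t1 : Ok * ((Fmat n m A + L k * Hmat n m) * P k * (Fmat n m A)ᵀ) * Vt = 0 := by
          rw [← Matrix.mul_assoc, ← Matrix.mul_assoc, Matrix.mul_add, e1,
            ← Matrix.mul_assoc, hL0, Matrix.zero_mul, add_zero,
            Matrix.mul_assoc (A * Ok * P k) (Fmat n m A)ᵀ Vt, e2,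
            ← Matrix.mul_assoc, Matrix.mul_assoc A Ok (P k),
            Matrix.mul_assoc A (Ok * P k) Vt, ih, Matrix.mul_zero, Matrix.zero_mul]
        rw [t1, t2, add_zero]
  have hL0 : ∀ k, Ok * L k = 0 := by
    intro k
    have hPH : Ok * P k * (Hmat n m)ᵀ = 0 := by
      rw [e4, ← Matrix.mul_assoc, hinv k, Matrix.zero_mul]
    rw [hL k, Matrix.mul_neg]
    rw [← Matrix.mul_assoc, ← Matrix.mul_assoc, ← Matrix.mul_assoc, e1,
      Matrix.mul_assoc A Ok (P k), Matrix.mul_assoc A (Ok * P k) (Hmat n m)ᵀ,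
      hPH, Matrix.mul_zero, Matrix.zero_mul, neg_zero]
  intro k
  induction k with
  | zero => exact hξb0
  | succ k ih =>
      rw [hξb k, ih, hx k, Matrix.mulVec_sub, Matrix.mulVec_mulVec, e1,
        Matrix.mulVec_mulVec, hL0 k, Matrix.zero_mulVec, sub_zero,
        ← Matrix.mulVec_mulVec, Matrix.mulVec_smul]
end
end

section
/- (Theorem 1, full equivalence.) Under the setup of the previous two parts (r ≠ 0, Q symmetric positive semidefinite, p ≥ 0, CKF with P_0 = p·I_{nm} and x̂[k+1] = F x̂[k] − L_k(y[k] − H x̂[k]); structured Kalman filter with Γ = 0, P̂_0 = (I_n⊗V̄)P_0(I_n⊗V̄)ᵀ, gains L̂_k from the observable Riccati recursion, updates ξ̂_o[k+1] = F_oo ξ̂_o[k] − L̂_k(y[k] − H_o ξ̂_o[k]), ξ̂_ō[k+1] = A ξ̂_ō[k], initial condition (ξ̂_o[0]; ξ̂_ō[0]) = T(0)⁻¹x̂[0], and the same measurement sequence y), the two filters coincide exactly in the original coordinates: T(0)·(ξ̂_o[k]; ξ̂_ō[k]) = x̂[k] for every k ≥ 0. -/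
open Matrix
open scoped Kronecker Matrix

noncomputable section

/-- all-ones square matrix -/
def Jmat (k : ℕ) : Matrix (Fin k) (Fin k) ℝ := Matrix.of fun _ _ => 1

lemma sum_ite_nat_eq {k : ℕ} (c : ℕ) (hc : c < k) (f : Fin k → ℝ) :
    (∑ j : Fin k, if (j : ℕ) = c then f j else 0) = f ⟨c, hc⟩ := by
  rw [Finset.sum_congr rfl (fun j _ => ?_), Finset.sum_ite_eq' Finset.univ (⟨c,hc⟩ : Fin k) f]
  · simp
  · congr 1
    simp [Fin.ext_iff]

lemma VV (m : ℕ) (hm : 2 ≤ m) : Vbar m * (Vbar m)ᵀ = 1 + Jmat (m-1) := by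
  ext i i'
  have hi := i.isLt
  have hi' := i'.isLt
  simp only [Matrix.mul_apply, Matrix.transpose_apply, Vbar, Matrix.of_apply,
    Matrix.add_apply, Matrix.one_apply, Jmat]
  have key : ∀ j : Fin m, ((if (j : ℕ) = m - 1 then (-1:ℝ) else if (j:ℕ) = (i:ℕ) then 1 else 0) *
      (if (j : ℕ) = m - 1 then (-1:ℝ) else if (j:ℕ) = (i':ℕ) then 1 else 0)) =
      (if (j:ℕ) = m - 1 then 1 else 0) + (if (j:ℕ) = (i:ℕ) ∧ i = i' then 1 else 0) := by
    intro j
    rcases eq_or_ne (j:ℕ) (m-1) with h | h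
    · have : ¬ ((j:ℕ) = (i:ℕ) ∧ i = i') := by rintro ⟨h1, h2⟩; omega
      have h5 : ¬ (m - 1 = (i:ℕ) ∧ i = i') := by rintro ⟨h3,h4⟩; omega
      simp only [h, if_true, h5, if_false, add_zero]; ring
    · simp only [h, if_false]
      rcases eq_or_ne (j:ℕ) (i:ℕ) with h1 | h1
      · rcases eq_or_ne i i' with h2 | h2
        · subst h2; simp [h1]
        · have : (j:ℕ) ≠ (i':ℕ) := by simp [Fin.ext_iff] at h2; omega
          have h6 : ¬ ((j:ℕ) = (i:ℕ) ∧ i = i') := by rintro ⟨h3,h4⟩; exact h2 h4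
          simp [h1, this, h6, Fin.ext_iff]
      · simp [h1]
  rw [Finset.sum_congr rfl (fun j _ => key j), Finset.sum_add_distrib,
    sum_ite_nat_eq (m-1) (by omega), ]
  rcases eq_or_ne i i' with h2 | h2
  · simp only [h2, and_true]
    rw [sum_ite_nat_eq (i':ℕ) (by omega)]
    simp [h2]
  · simp [h2]

lemma JJ (k : ℕ) : Jmat k * Jmat k = (k : ℝ) • Jmat k := by
  ext i j; simp [Jmat, Matrix.mul_apply]

lemma VVinv (m : ℕ) (hm : 2 ≤ m) :
    (Vbar m * (Vbar m)ᵀ)⁻¹ = 1 - (m : ℝ)⁻¹ • Jmat (m-1) := by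
  have hm0 : (m : ℝ) ≠ 0 := by positivity
  apply Matrix.inv_eq_right_inv
  rw [VV m hm]
  have hcard : ((m - 1 : ℕ) : ℝ) = (m : ℝ) - 1 := by
    have : (1:ℕ) ≤ m := by omega
    push_cast [this]; ring
  rw [mul_sub, add_mul, add_mul, mul_one, one_mul, Matrix.mul_smul, mul_one,
    JJ, smul_smul, hcard]
  have : (m:ℝ)⁻¹ • Jmat (m-1) + ((m:ℝ)⁻¹ * ((m:ℝ) - 1)) • Jmat (m-1) = Jmat (m-1) := by
    rw [← add_smul]
    have : (m:ℝ)⁻¹ + (m:ℝ)⁻¹ * ((m:ℝ) - 1) = 1 := by field_simp; ring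
    rw [this, one_smul]
  rw [this]
  abel

lemma sum_delta (k c : ℕ) : (∑ j : Fin k, if c = (j:ℕ) then (1:ℝ) else 0) =
    if c < k then 1 else 0 := by
  rcases lt_or_ge c k with h | h
  · have h1 : (∑ j : Fin k, if c = (j:ℕ) then (1:ℝ) else 0) =
        ∑ j : Fin k, if (j:ℕ) = c then (1:ℝ) else 0 :=
      Finset.sum_congr rfl (fun j _ => by simp [eq_comm])
    rw [h1, sum_ite_nat_eq c h (fun _ => (1:ℝ)), if_pos h]
  · rw [if_neg (by omega)]
    apply Finset.sum_eq_zero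
    intro j _
    have := j.isLt
    rw [if_neg (by omega)]

lemma VtJ (m : ℕ) (hm : 2 ≤ m) : (Vbar m)ᵀ * Jmat (m-1) =
    Matrix.of fun (a : Fin m) (_ : Fin (m-1)) => if (a:ℕ) = m-1 then -((m:ℝ)-1) else 1 := by
  ext a i
  simp only [Matrix.mul_apply, Matrix.transpose_apply, Vbar, Jmat, Matrix.of_apply, mul_one]
  rcases eq_or_ne (a:ℕ) (m-1) with h | h
  · rw [if_pos h,
      show (∑ x : Fin (m-1), if (a:ℕ) = m-1 then (-1:ℝ) else if (a:ℕ) = (x:ℕ) then 1 else 0)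
        = ∑ _x : Fin (m-1), (-1:ℝ) from Finset.sum_congr rfl (fun x _ => if_pos h)]
    simp only [Finset.sum_const, Finset.card_univ, Fintype.card_fin, nsmul_eq_mul, mul_neg,
      mul_one]
    have h1 : (1:ℕ) ≤ m := by omega
    push_cast [h1]; ring
  · simp only [h, if_false]
    have ha : (a:ℕ) < m - 1 := by have := a.isLt; omega
    have := sum_delta (m-1) (a:ℕ)
    rw [this, if_pos ha]

lemma Vdag_eq (m : ℕ) (hm : 2 ≤ m) : Vdag m =
    Matrix.of fun (a : Fin m) (i : Fin (m-1)) => (if (a:ℕ) = (i:ℕ) then (1:ℝ) else 0) - (m:ℝ)⁻¹ := by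
  have hm0 : (m : ℝ) ≠ 0 := by positivity
  rw [Vdag, VVinv m hm, Matrix.mul_sub, Matrix.mul_one, Matrix.mul_smul, VtJ m hm]
  ext a i
  have hi := i.isLt
  simp only [Matrix.sub_apply, Matrix.smul_apply, Matrix.transpose_apply, Vbar,
    Matrix.of_apply, smul_eq_mul]
  rcases eq_or_ne (a:ℕ) (m-1) with h | h
  · have : (a:ℕ) ≠ (i:ℕ) := by omega
    rw [if_pos h, if_pos h, if_neg this]
    field_simp
    ring
  · rw [if_neg h, if_neg h, mul_one]

lemma VdV (m : ℕ) (hm : 2 ≤ m) : Vdag m * Vbar m = 1 - (m:ℝ)⁻¹ • Jmat m := by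
  have hm0 : (m : ℝ) ≠ 0 := by positivity
  rw [Vdag_eq m hm]
  ext a b
  have hb := b.isLt
  simp only [Matrix.mul_apply, Matrix.of_apply, Vbar, Matrix.sub_apply, Matrix.smul_apply,
    Matrix.one_apply, Jmat, smul_eq_mul, mul_one]
  rcases eq_or_ne (b:ℕ) (m-1) with h | h
  · have key : ∀ i : Fin (m-1),
        ((if (a:ℕ) = (i:ℕ) then (1:ℝ) else 0) - (m:ℝ)⁻¹) *
          (if (b:ℕ) = m-1 then -1 else if (b:ℕ) = (i:ℕ) then 1 else 0) =
        -(if (a:ℕ) = (i:ℕ) then (1:ℝ) else 0) + (m:ℝ)⁻¹ := by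
      intro i; rw [if_pos h]; ring
    rw [Finset.sum_congr rfl (fun i _ => key i), Finset.sum_add_distrib, Finset.sum_neg_distrib,
      sum_delta (m-1) (a:ℕ)]
    simp only [Finset.sum_const, Finset.card_univ, Fintype.card_fin, nsmul_eq_mul]
    have h1 : (1:ℕ) ≤ m := by omega
    rcases eq_or_ne (a:ℕ) (m-1) with ha | ha
    · have hab : a = b := by apply Fin.ext; omega
      rw [if_neg (by omega), if_pos hab]
      push_cast [h1]
      field_simp
      ring
    · have hab : a ≠ b := by simp [Fin.ext_iff]; omega
      have ha2 : (a:ℕ) < m - 1 := by have := a.isLt; omega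
      rw [if_pos ha2, if_neg hab]
      push_cast [h1]
      field_simp
      ring
  · have key : ∀ i : Fin (m-1),
        ((if (a:ℕ) = (i:ℕ) then (1:ℝ) else 0) - (m:ℝ)⁻¹) *
          (if (b:ℕ) = m-1 then -1 else if (b:ℕ) = (i:ℕ) then 1 else 0) =
        if (b:ℕ) = (i:ℕ) then ((if (a:ℕ) = (i:ℕ) then (1:ℝ) else 0) - (m:ℝ)⁻¹) else 0 := by
      intro i
      rw [if_neg h]
      rcases eq_or_ne (b:ℕ) (i:ℕ) with h2 | h2
      · rw [if_pos h2, if_pos h2, mul_one]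
      · rw [if_neg h2, if_neg h2, mul_zero]
    have hb2 : (b:ℕ) < m - 1 := by omega
    have key2 : ∀ i : Fin (m-1), (if (b:ℕ) = (i:ℕ) then
        ((if (a:ℕ) = (i:ℕ) then (1:ℝ) else 0) - (m:ℝ)⁻¹) else 0) =
        if (i:ℕ) = (b:ℕ) then ((if (a:ℕ) = (i:ℕ) then (1:ℝ) else 0) - (m:ℝ)⁻¹) else 0 := by
      intro i; simp [eq_comm]
    rw [Finset.sum_congr rfl (fun i _ => (key i).trans (key2 i)),
      sum_ite_nat_eq (b:ℕ) hb2]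
    simp [Fin.ext_iff]

section Struct
variable (n m : ℕ) (A Q : Matrix (Fin n) (Fin n) ℝ)

lemma kronT {a b c d : ℕ} (X : Matrix (Fin a) (Fin b) ℝ) (Y : Matrix (Fin c) (Fin d) ℝ) :
    (X ⊗ₖ Y)ᵀ = Xᵀ ⊗ₖ Yᵀ := (Matrix.kroneckerMap_transpose _ _ _).symm

lemma VbK_F : VbarK n m * Fmat n m A = Foo n m A * VbarK n m := by
  simp only [VbarK, Fmat, Foo, ← Matrix.mul_kronecker_mul, Matrix.one_mul, Matrix.mul_one]

lemma H_fact : Hmat n m = Ho n m * VbarK n m := by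
  simp only [Hmat, Ho, VbarK, ← Matrix.mul_kronecker_mul, Matrix.one_mul, Matrix.mul_one]

lemma QVbT : (Q ⊗ₖ (1 : Matrix (Fin m) (Fin m) ℝ)) * (VbarK n m)ᵀ =
    (VbarK n m)ᵀ * (Q ⊗ₖ (1 : Matrix (Fin (m-1)) (Fin (m-1)) ℝ)) := by
  simp only [VbarK, kronT, Matrix.transpose_one, ← Matrix.mul_kronecker_mul,
    Matrix.one_mul, Matrix.mul_one]

lemma VbK_Q : VbarK n m * (Q ⊗ₖ (1 : Matrix (Fin m) (Fin m) ℝ)) * (VbarK n m)ᵀ =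
    Q ⊗ₖ (Vbar m * (Vbar m)ᵀ) := by
  rw [Matrix.mul_assoc, QVbT, ← Matrix.mul_assoc]
  simp only [VbarK, kronT, Matrix.transpose_one, ← Matrix.mul_kronecker_mul,
    Matrix.one_mul, Matrix.mul_one]

lemma onesT_F : (onesK n m)ᵀ * Fmat n m A = A * (onesK n m)ᵀ := by
  ext j q
  rw [Matrix.mul_apply, Matrix.mul_apply, Fintype.sum_prod_type]
  simp only [onesK, Fmat, Matrix.transpose_apply, Matrix.of_apply, Matrix.kroneckerMap_apply,
    Matrix.one_apply]
  simp [Finset.sum_ite_eq, Finset.sum_ite_eq', mul_ite, ite_and]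

lemma VbK_ones : VbarK n m * onesK n m = 0 := by
  ext q j
  rw [Matrix.mul_apply, Fintype.sum_prod_type]
  simp only [VbarK, onesK, Vbar, Matrix.kroneckerMap_apply, Matrix.of_apply, Matrix.one_apply]
  simp only [mul_ite, mul_one, mul_zero, ite_mul, one_mul, zero_mul]
  have swap : ∀ x : Fin n, (∑ x_1 : Fin m, if x = j then
      (if (x_1:ℕ) = m - 1 then (if q.1 = x then (-1:ℝ) else 0)
       else if (x_1:ℕ) = (q.2:ℕ) then (if q.1 = x then 1 else 0) else 0) else 0) =
      if x = j then (∑ x_1 : Fin m,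
      if (x_1:ℕ) = m - 1 then (if q.1 = x then (-1:ℝ) else 0)
      else if (x_1:ℕ) = (q.2:ℕ) then (if q.1 = x then 1 else 0) else 0) else 0 := by
    intro x; split <;> simp
  rw [Finset.sum_congr rfl (fun x _ => swap x),
    Finset.sum_ite_eq' Finset.univ j (fun x => ∑ x_1 : Fin m,
    if (x_1:ℕ) = m - 1 then (if q.1 = x then (-1:ℝ) else 0)
    else if (x_1:ℕ) = (q.2:ℕ) then (if q.1 = x then 1 else 0) else 0)]
  simp only [Finset.mem_univ, if_true, Matrix.zero_apply]
  have hq := q.2.isLt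
  have key : ∀ x_1 : Fin m, (if (x_1:ℕ) = m - 1 then (if q.1 = j then (-1:ℝ) else 0)
      else if (x_1:ℕ) = (q.2:ℕ) then (if q.1 = j then 1 else 0) else 0) =
      (if (x_1:ℕ) = m - 1 then (if q.1 = j then (-1:ℝ) else 0) else 0) +
      (if (x_1:ℕ) = (q.2:ℕ) then (if q.1 = j then (1:ℝ) else 0) else 0) := by
    intro x_1
    rcases eq_or_ne (x_1:ℕ) (m-1) with h | h
    · rw [if_pos h, if_pos h, if_neg (by omega : ¬ (x_1:ℕ) = (q.2:ℕ)), add_zero]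
    · rw [if_neg h, if_neg h, zero_add]
  rw [Finset.sum_congr rfl (fun x_1 _ => key x_1), Finset.sum_add_distrib,
    sum_ite_nat_eq (m-1) (by omega : m - 1 < m), sum_ite_nat_eq (q.2:ℕ) (by omega : (q.2:ℕ) < m)]
  rcases eq_or_ne q.1 j with h | h <;> simp [h]
  

lemma onesK_onesT : onesK n m * (onesK n m)ᵀ =
    (1 : Matrix (Fin n) (Fin n) ℝ) ⊗ₖ Jmat m := by
  ext q q'
  rw [Matrix.mul_apply]
  simp only [onesK, Jmat, Matrix.transpose_apply, Matrix.of_apply, Matrix.kroneckerMap_apply,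
    Matrix.one_apply, mul_one, ite_mul, one_mul, zero_mul, mul_ite]
  simp [Finset.sum_ite_eq, ite_and, eq_comm]

end Struct

lemma VdK_VbK (n m : ℕ) (hm : 2 ≤ m) :
    VdagK n m * VbarK n m + (m:ℝ)⁻¹ • (onesK n m * (onesK n m)ᵀ) = 1 := by
  rw [onesK_onesT, VdagK, VbarK]
  simp only [← Matrix.mul_kronecker_mul, Matrix.one_mul, Matrix.mul_one]
  rw [VdV m hm, ← Matrix.kronecker_smul, ← Matrix.kronecker_add, sub_add_cancel,
    Matrix.one_kronecker_one]
/-- **Theorem 1, full equivalence.** With the CKF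
(`P₀ = p·I`, gains `L_k`, state `x̂`) and the structured Kalman filter with `Γ = 0`
(observable Riccati recursion started at `P̂₀ = (I_n⊗V̄)P₀(I_n⊗V̄)ᵀ`, updates
`ξ̂_o`, `ξ̂_ō[k+1] = Aξ̂_ō[k]`, initialization `(ξ̂_o[0]; ξ̂_ō[0]) = T(0)⁻¹x̂[0]`,
same measurements `y`), the two filters coincide in the original coordinates:
`T(0)(ξ̂_o[k]; ξ̂_ō[k]) = x̂[k]` for every `k`. -/
theorem stmt_13 (n m : ℕ) (hn : 1 ≤ n) (hm : 2 ≤ m)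
    (A : Matrix (Fin n) (Fin n) ℝ) (r : ℝ) (hr : r ≠ 0)
    (Q : Matrix (Fin n) (Fin n) ℝ) (hQ : Q.PosSemidef)
    (p : ℝ) (hp : 0 ≤ p)
    (P : ℕ → Matrix (Fin n × Fin m) (Fin n × Fin m) ℝ)
    (L : ℕ → Matrix (Fin n × Fin m) (Fin 1 × Fin (m-1)) ℝ)
    (hP0 : P 0 = p • 1)
    (hL : ∀ k, L k = -(Fmat n m A * P k * (Hmat n m)ᵀ *
      (Hmat n m * P k * (Hmat n m)ᵀ + r ^ 2 • 1)⁻¹))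
    (hP : ∀ k, P (k+1) = (Fmat n m A + L k * Hmat n m) * P k * (Fmat n m A)ᵀ +
      Q ⊗ₖ (1 : Matrix (Fin m) (Fin m) ℝ))
    (y : ℕ → Fin 1 × Fin (m-1) → ℝ)
    (xhat : ℕ → Fin n × Fin m → ℝ)
    (hx : ∀ k, xhat (k+1) =
      Fmat n m A *ᵥ xhat k - L k *ᵥ (y k - Hmat n m *ᵥ xhat k))
    (Phat : ℕ → Matrix (Fin n × Fin (m-1)) (Fin n × Fin (m-1)) ℝ)
    (Lhat : ℕ → Matrix (Fin n × Fin (m-1)) (Fin 1 × Fin (m-1)) ℝ)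
    (hPhat0 : Phat 0 = VbarK n m * P 0 * (VbarK n m)ᵀ)
    (hLhat : ∀ k, Lhat k = -(Foo n m A * Phat k * (Ho n m)ᵀ *
      (Ho n m * Phat k * (Ho n m)ᵀ + r ^ 2 • 1)⁻¹))
    (hPhat : ∀ k, Phat (k+1) =
      (Foo n m A + Lhat k * Ho n m) * Phat k * (Foo n m A)ᵀ +
        Q ⊗ₖ (Vbar m * (Vbar m)ᵀ))
    (ξo : ℕ → Fin n × Fin (m-1) → ℝ)
    (ξb : ℕ → Fin n → ℝ)
    (hξo : ∀ k, ξo (k+1) =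
      Foo n m A *ᵥ ξo k - Lhat k *ᵥ (y k - Ho n m *ᵥ ξo k))
    (hξb : ∀ k, ξb (k+1) = A *ᵥ ξb k)
    (hξo0 : ξo 0 = VbarK n m *ᵥ xhat 0)
    (hξb0 : ξb 0 = (m : ℝ)⁻¹ • ((onesK n m)ᵀ *ᵥ xhat 0)) :
    ∀ k, Tmat n m 0 *ᵥ Sum.elim (ξo k) (ξb k) = xhat k := by
  have honesVbT : (onesK n m)ᵀ * (VbarK n m)ᵀ = 0 := by
    rw [← Matrix.transpose_mul, VbK_ones, Matrix.transpose_zero]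
  have hFt : (Fmat n m A)ᵀ * (VbarK n m)ᵀ = (VbarK n m)ᵀ * (Foo n m A)ᵀ := by
    rw [← Matrix.transpose_mul, ← Matrix.transpose_mul, VbK_F]
  -- gains lemma: from invariants at time k, conclude gain relations at time k
  have gains : ∀ k, (onesK n m)ᵀ * P k * (VbarK n m)ᵀ = 0 →
      Phat k = VbarK n m * P k * (VbarK n m)ᵀ →
      Lhat k = VbarK n m * L k ∧ (onesK n m)ᵀ * L k = 0 := by
    intro k ih1 ih2
    have hS : Hmat n m * P k * (Hmat n m)ᵀ = Ho n m * Phat k * (Ho n m)ᵀ := by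
      rw [ih2, H_fact n m, Matrix.transpose_mul]
      simp only [Matrix.mul_assoc]
    have hFPH : VbarK n m * (Fmat n m A * P k * (Hmat n m)ᵀ) =
        Foo n m A * Phat k * (Ho n m)ᵀ := by
      calc VbarK n m * (Fmat n m A * P k * (Hmat n m)ᵀ)
          = (VbarK n m * Fmat n m A) * (P k * (Hmat n m)ᵀ) := by
            simp only [Matrix.mul_assoc]
        _ = (Foo n m A * VbarK n m) * (P k * (Hmat n m)ᵀ) := by rw [VbK_F]
        _ = Foo n m A * Phat k * (Ho n m)ᵀ := by
            rw [ih2, H_fact n m, Matrix.transpose_mul]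
            simp only [Matrix.mul_assoc]
    constructor
    · rw [hLhat k, hL k, Matrix.mul_neg]
      congr 1
      rw [← hS, ← Matrix.mul_assoc, hFPH]
    · rw [hL k, Matrix.mul_neg, neg_eq_zero]
      have honesPH : (onesK n m)ᵀ * (Fmat n m A * P k * (Hmat n m)ᵀ) = 0 := by
        calc (onesK n m)ᵀ * (Fmat n m A * P k * (Hmat n m)ᵀ)
            = ((onesK n m)ᵀ * Fmat n m A) * (P k * (Hmat n m)ᵀ) := by
              simp only [Matrix.mul_assoc]
          _ = (A * (onesK n m)ᵀ) * (P k * (Hmat n m)ᵀ) := by rw [onesT_F]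
          _ = A * (((onesK n m)ᵀ * P k * (VbarK n m)ᵀ) * (Ho n m)ᵀ) := by
              rw [H_fact n m, Matrix.transpose_mul]
              simp only [Matrix.mul_assoc]
          _ = 0 := by rw [ih1, Matrix.zero_mul, Matrix.mul_zero]
      calc (onesK n m)ᵀ * (Fmat n m A * P k * (Hmat n m)ᵀ *
            (Hmat n m * P k * (Hmat n m)ᵀ + r ^ 2 • 1)⁻¹)
          = ((onesK n m)ᵀ * (Fmat n m A * P k * (Hmat n m)ᵀ)) *
            (Hmat n m * P k * (Hmat n m)ᵀ + r ^ 2 • 1)⁻¹ := by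
            simp only [Matrix.mul_assoc]
        _ = 0 := by rw [honesPH, Matrix.zero_mul]
  -- covariance invariants
  have main : ∀ k, (onesK n m)ᵀ * P k * (VbarK n m)ᵀ = 0 ∧
      Phat k = VbarK n m * P k * (VbarK n m)ᵀ := by
    intro k
    induction k with
    | zero =>
      refine ⟨?_, hPhat0⟩
      rw [hP0, Matrix.mul_smul, Matrix.mul_one, Matrix.smul_mul, honesVbT, smul_zero]
    | succ k ih =>
      obtain ⟨ih1, ih2⟩ := ih
      obtain ⟨hLhatk, hLok⟩ := gains k ih1 ih2
      have key1 : (onesK n m)ᵀ * (Fmat n m A + L k * Hmat n m) = A * (onesK n m)ᵀ := by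
        rw [Matrix.mul_add, onesT_F, ← Matrix.mul_assoc, hLok, Matrix.zero_mul, add_zero]
      have key2 : VbarK n m * (Fmat n m A + L k * Hmat n m) =
          (Foo n m A + Lhat k * Ho n m) * VbarK n m := by
        rw [Matrix.mul_add, Matrix.add_mul, VbK_F, hLhatk, H_fact n m]
        simp only [Matrix.mul_assoc]
      constructor
      · have t2 : (onesK n m)ᵀ * (Q ⊗ₖ (1 : Matrix (Fin m) (Fin m) ℝ)) * (VbarK n m)ᵀ = 0 := by
          rw [Matrix.mul_assoc, QVbT, ← Matrix.mul_assoc, honesVbT, Matrix.zero_mul]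
        have t1 : (onesK n m)ᵀ * ((Fmat n m A + L k * Hmat n m) * P k * (Fmat n m A)ᵀ) *
            (VbarK n m)ᵀ = 0 := by
          calc (onesK n m)ᵀ * ((Fmat n m A + L k * Hmat n m) * P k * (Fmat n m A)ᵀ) *
              (VbarK n m)ᵀ
              = ((onesK n m)ᵀ * (Fmat n m A + L k * Hmat n m)) *
                (P k * ((Fmat n m A)ᵀ * (VbarK n m)ᵀ)) := by simp only [Matrix.mul_assoc]
            _ = (A * (onesK n m)ᵀ) * (P k * ((VbarK n m)ᵀ * (Foo n m A)ᵀ)) := by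
                rw [key1, hFt]
            _ = A * (((onesK n m)ᵀ * P k * (VbarK n m)ᵀ) * (Foo n m A)ᵀ) := by
                simp only [Matrix.mul_assoc]
            _ = 0 := by rw [ih1, Matrix.zero_mul, Matrix.mul_zero]
        rw [hP k, Matrix.mul_add, Matrix.add_mul, t1, t2, add_zero]
      · rw [hPhat k, hP k]
        conv_rhs => rw [Matrix.mul_add, Matrix.add_mul, VbK_Q]
        congr 1
        calc (Foo n m A + Lhat k * Ho n m) * Phat k * (Foo n m A)ᵀ
            = (VbarK n m * (Fmat n m A + L k * Hmat n m)) *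
              (P k * ((VbarK n m)ᵀ * (Foo n m A)ᵀ)) := by
              rw [key2, ih2]; simp only [Matrix.mul_assoc]
          _ = VbarK n m * ((Fmat n m A + L k * Hmat n m) * P k * (Fmat n m A)ᵀ) *
              (VbarK n m)ᵀ := by rw [← hFt]; simp only [Matrix.mul_assoc]
  -- state invariants
  have st : ∀ k, ξo k = VbarK n m *ᵥ xhat k ∧
      ξb k = (m : ℝ)⁻¹ • ((onesK n m)ᵀ *ᵥ xhat k) := by
    intro k
    induction k with
    | zero => exact ⟨hξo0, hξb0⟩
    | succ k ih =>
      obtain ⟨ih1, ih2⟩ := ih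
      obtain ⟨hLhatk, hLok⟩ := gains k (main k).1 (main k).2
      constructor
      · rw [hξo k, hx k, ih1, hLhatk]
        simp only [Matrix.mulVec_sub, Matrix.mulVec_mulVec]
        rw [VbK_F, H_fact n m]
        simp only [Matrix.mul_assoc]
      · rw [hξb k, hx k, ih2, Matrix.mulVec_smul]
        simp only [Matrix.mulVec_sub, Matrix.mulVec_mulVec, ← Matrix.mul_assoc, hLok,
          Matrix.zero_mulVec, Matrix.zero_mul, sub_zero]
        rw [← onesT_F]
  intro k
  obtain ⟨h1, h2⟩ := st k
  rw [Tmat, Matrix.mul_zero, add_zero, Matrix.fromCols_mulVec_sumElim, h1, h2,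
    Matrix.mulVec_mulVec, Matrix.mulVec_smul, Matrix.mulVec_mulVec,
    ← Matrix.smul_mulVec, ← Matrix.add_mulVec, VdK_VbK n m hm, Matrix.one_mulVec]
end
end
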